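/- Let D' be a digraph of order n−1 whose underlying graph is a tree and with γ_OL(D') = n−1, and let b be a domination-forced vertex of D'. Form D by adding a new vertex a with arcs ba and aa (a loop at a). Then the underlying graph of D is a tree and γ_OL(D) = n. -/

import Mathlib

open scoped symmDiff

/-- The open in-neighbourhood of `v` in the digraph `D` (loops allowed). -/
def Nin {V : Type*} (D : V → V → Prop) (v : V) : Set V := {u | D u v}

/-- A digraph is locatable if every vertex has positive in-degree and
open in-neighbourhoods are pairwise distinct. -/
def Locatable {V : Type*} (D : V → V → Prop) : Prop :=
  (∀ v, (Nin D v).Nonempty) ∧ ∀ x y, Nin D x = Nin D y → x = y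

/-- `S` is an open neighbourhood locating-dominating set of `D`. -/
def IsOLD {V : Type*} (D : V → V → Prop) (S : Set V) : Prop :=
  (∀ v, ∃ u ∈ S, D u v) ∧ ∀ x y, x ≠ y → ∃ s ∈ S, s ∈ Nin D x ∆ Nin D y

/-- The OLD number `γ_OL(D)`: minimum size of an OLD set. -/
noncomputable def oldNum {V : Type*} (D : V → V → Prop) : ℕ :=
  sInf {k | ∃ S : Set V, IsOLD D S ∧ S.ncard = k}

/-- `v` is domination-forced: it is the unique in-neighbour of some vertex. -/
def DomForced {V : Type*} (D : V → V → Prop) (v : V) : Prop := ∃ w, Nin D w = {v}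

/-- `v` is location-forced: some pair of distinct vertices has
in-neighbourhood symmetric difference `{v}`. -/
def LocForced {V : Type*} (D : V → V → Prop) (v : V) : Prop :=
  ∃ x y, x ≠ y ∧ Nin D x ∆ Nin D y = {v}

/-- The arc `xy` is a forcing arc. -/
def ForcingArc {V : Type*} (D : V → V → Prop) (x y : V) : Prop :=
  Nin D y = {x} ∨ ∃ z, Nin D y ∆ Nin D z = {x} ∧ x ∈ Nin D y

/-- The underlying simple undirected graph of a digraph. -/
def underlying {V : Type*} (D : V → V → Prop) : SimpleGraph V where
  Adj x y := x ≠ y ∧ (D x y ∨ D y x)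
  symm := ⟨fun x y h => ⟨h.1.symm, h.2.symm⟩⟩
  loopless := ⟨fun x h => h.1 rfl⟩

/-!
The new vertex `a` is a leaf hanging off `b`, so the underlying graph stays a tree: it is still
connected and has gained one vertex and one edge. For the OLD number, `γ_OL(D') = |V(D')|` says
that `V(D')` is the only OLD set of `D'`, i.e. `D'` is locatable and no vertex can be dropped.
The in-neighbourhoods of old vertices are unchanged, so any OLD set of `D` restricts to an OLD set
of `D'`, which must be all of `V(D')`; and `a` itself is forced, because the vertex `w` with
`N⁻(w) = {b}` and the vertex `a` with `N⁻(a) = {a, b}` are separated only by `a`.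
-/

namespace SimpleGraph

variable {V : Type*}

theorem IsTree.map_some_sup_edge [Finite V] {G : SimpleGraph V} (hG : G.IsTree) (b : V) :
    (G.map Function.Embedding.some ⊔ edge (some b) none).IsTree := by
  rw [isTree_iff_connected_and_card] at hG ⊢
  obtain ⟨hconn, hcard⟩ := hG
  set H := G.map Function.Embedding.some ⊔ edge (some b) none
  have hleaf : H.Adj (some b) none := by simp [H, edge_adj]
  have hreach : ∀ x, H.Reachable x none
    | none => .rfl
    | some v => (((hconn.preconnected v b).map (Embedding.map .some G).toHom).mono
        le_sup_left).trans hleaf.reachable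
  refine ⟨.mk fun x y => (hreach x).trans (hreach y).symm, ?_⟩
  have hnew : s(some b, none) ∉ (G.map Function.Embedding.some).edgeSet := by
    simp [map_adj']
  rw [edgeSet_sup, edgeSet_edge_of_ne (Option.some_ne_none b), Set.union_singleton,
    Nat.card_coe_set_eq, Set.ncard_insert_of_notMem hnew, ← Nat.card_coe_set_eq, edgeSet_map,
    Nat.card_image_of_injective Function.Embedding.some.sym2Map.injective, Finite.card_option,
    hcard]

end SimpleGraph

section

variable {V W : Type*}

theorem isOLD_univ_iff_locatable {D : V → V → Prop} : IsOLD D Set.univ ↔ Locatable D := by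
  simp only [IsOLD, Locatable, Set.mem_univ, true_and, ← Set.nonempty_def (s := _ ∆ _),
    Set.symmDiff_nonempty]
  exact and_congr Iff.rfl (forall₂_congr fun _ _ => not_imp_not)

theorem IsOLD.mono {D : V → V → Prop} {S T : Set V} (hS : IsOLD D S) (hST : S ⊆ T) :
    IsOLD D T :=
  ⟨fun v => (hS.1 v).imp fun _ ⟨hu, h⟩ => ⟨hST hu, h⟩,
    fun x y hxy => (hS.2 x y hxy).imp fun _ ⟨hs, h⟩ => ⟨hST hs, h⟩⟩

theorem IsOLD.preimage {D : W → W → Prop} {D' : V → V → Prop} {f : V → W}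
    (hf : f.Injective) (hN : ∀ v, Nin D (f v) = f '' Nin D' v) {S : Set W} (hS : IsOLD D S) :
    IsOLD D' (f ⁻¹' S) := by
  refine ⟨fun v => ?_, fun x y hxy => ?_⟩
  · obtain ⟨_, hu, hfu⟩ := hS.1 (f v)
    obtain ⟨u, hu', rfl⟩ := (hN v).le hfu
    exact ⟨u, hu, hu'⟩
  · obtain ⟨s, hs, hsxy⟩ := hS.2 (f x) (f y) (hf.ne hxy)
    rw [hN, hN, ← Set.image_symmDiff hf] at hsxy
    obtain ⟨t, ht, rfl⟩ := hsxy
    exact ⟨t, hs, ht⟩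

theorem oldNum_eq_card_iff [Finite V] {D : V → V → Prop} :
    oldNum D = Nat.card V ↔ ∀ S, IsOLD D S ↔ S = Set.univ := by
  refine ⟨fun h S => ⟨fun hS => ?_, ?_⟩, fun h => ?_⟩
  · refine Set.eq_of_subset_of_ncard_le (Set.subset_univ S) ?_
    rw [Set.ncard_univ, ← h]
    exact Nat.sInf_le ⟨S, hS, rfl⟩
  · rintro rfl
    by_contra hu
    have hnone : {k | ∃ S, IsOLD D S ∧ S.ncard = k} = ∅ :=
      Set.eq_empty_of_forall_notMem fun _ ⟨S, hS, _⟩ => hu (hS.mono (Set.subset_univ S))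
    rw [oldNum, hnone, Nat.sInf_empty, eq_comm, Finite.card_eq_zero_iff] at h
    exact hu ⟨isEmptyElim, isEmptyElim⟩
  · have hsizes : {k | ∃ S, IsOLD D S ∧ S.ncard = k} = {Nat.card V} := by
      ext k
      simp [h, eq_comm]
    rw [oldNum, hsizes, csInf_singleton]

/-- `none` is the new vertex `a`, with in-neighbours `b` and `a` itself. -/
def addLoopedLeaf (D : V → V → Prop) (b : V) : Option V → Option V → Prop
  | some u, some v => D u v
  | some u, none => u = b
  | none, none => True
  | none, some _ => False

section addLoopedLeaf

variable (D : V → V → Prop) (b : V)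

theorem nin_addLoopedLeaf_some (v : V) : Nin (addLoopedLeaf D b) (some v) = some '' Nin D v := by
  ext (_ | u) <;> simp [Nin, addLoopedLeaf]

theorem nin_addLoopedLeaf_none : Nin (addLoopedLeaf D b) none = {some b, none} := by
  ext (_ | u) <;> simp [Nin, addLoopedLeaf]

theorem underlying_addLoopedLeaf :
    underlying (addLoopedLeaf D b) =
      (underlying D).map Function.Embedding.some ⊔ SimpleGraph.edge (some b) none := by
  ext (_ | x) (_ | y) <;>
    simp [underlying, addLoopedLeaf, SimpleGraph.edge_adj, SimpleGraph.map_adj', eq_comm]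

variable {D b}

theorem locatable_addLoopedLeaf (hD : Locatable D) : Locatable (addLoopedLeaf D b) := by
  have hnone : ∀ v, Nin (addLoopedLeaf D b) none ≠ Nin (addLoopedLeaf D b) (some v) := by
    intro v h
    have : none ∈ Nin (addLoopedLeaf D b) (some v) := h ▸ by simp [nin_addLoopedLeaf_none]
    simp [nin_addLoopedLeaf_some] at this
  refine ⟨fun v => ?_, fun x y h => ?_⟩
  · cases v with
    | none => exact ⟨none, by simp [nin_addLoopedLeaf_none]⟩
    | some v => exact nin_addLoopedLeaf_some D b v ▸ (hD.1 v).image some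
  · cases x <;> cases y
    · rfl
    · exact absurd h (hnone _)
    · exact absurd h.symm (hnone _)
    · rw [nin_addLoopedLeaf_some, nin_addLoopedLeaf_some] at h
      exact congrArg some (hD.2 _ _ (Set.image_injective.2 (Option.some_injective V) h))

theorem IsOLD.none_mem_of_domForced (hb : DomForced D b) {S : Set (Option V)}
    (hS : IsOLD (addLoopedLeaf D b) S) : none ∈ S := by
  obtain ⟨w, hw⟩ := hb
  obtain ⟨s, hs, hsep⟩ := hS.2 none (some w) (Option.some_ne_none w).symm
  rw [nin_addLoopedLeaf_none, nin_addLoopedLeaf_some, hw, Set.image_singleton] at hsep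
  obtain rfl : s = none := by
    simp only [Set.mem_symmDiff, Set.mem_insert_iff, Set.mem_singleton_iff] at hsep
    tauto
  exact hs

theorem oldNum_addLoopedLeaf [Finite V] (hD : oldNum D = Nat.card V) (hb : DomForced D b) :
    oldNum (addLoopedLeaf D b) = Nat.card (Option V) := by
  rw [oldNum_eq_card_iff] at hD ⊢
  refine fun S => ⟨fun hS => ?_, ?_⟩
  · have hsome : some ⁻¹' S = Set.univ :=
      (hD _).1 (hS.preimage (Option.some_injective V) (nin_addLoopedLeaf_some D b))
    ext (_ | v)
    · simpa using hS.none_mem_of_domForced hb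
    · simpa using congrArg (v ∈ ·) hsome
  · rintro rfl
    exact isOLD_univ_iff_locatable.2 <|
      locatable_addLoopedLeaf (isOLD_univ_iff_locatable.1 ((hD _).2 rfl))

end addLoopedLeaf

end

theorem stmt_18 {V : Type*} [Fintype V] (D' : V → V → Prop) (b : V)
    (htree : (underlying D').IsTree) (hext : oldNum D' = Fintype.card V)
    (hb : DomForced D' b)
    (D : Option V → Option V → Prop)
    (hD : ∀ x y, D x y ↔
      ((∃ u v, x = some u ∧ y = some v ∧ D' u v) ∨
        (x = some b ∧ y = none) ∨ (x = none ∧ y = none))) :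
    (underlying D).IsTree ∧ oldNum D = Fintype.card (Option V) := by
  obtain rfl : D = addLoopedLeaf D' b := by
    funext x y
    apply propext
    rw [hD]
    cases x <;> cases y <;> simp [addLoopedLeaf]
  rw [← Nat.card_eq_fintype_card] at hext ⊢
  exact ⟨underlying_addLoopedLeaf D' b ▸ htree.map_some_sup_edge b, oldNum_addLoopedLeaf hext hb⟩
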